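/- arXiv:2209.01985 — 3 statements merged into one kernel-verified Lean document; each statement's English description precedes it below -/
import Mathlib

section
/- Let μ ∈ ℝ, φ > 0, and let Z = exp(X) where X is distributed according to the Gaussian measure N(μ, φ²) on ℝ. Then for every ε ≥ 0 with ε ≠ 1, the population Atkinson index satisfies 1 − (E[Z^{1−ε}])^{1/(1−ε)} / E[Z] = 1 − exp(−ε φ² / 2). -/
open MeasureTheory ProbabilityTheory

lemma integral_exp_mul_gaussianReal_rpow_inv (μ : ℝ) (v : NNReal) {s : ℝ} (hs : s ≠ 0) :
    (∫ x, Real.exp (s * x) ∂gaussianReal μ v) ^ (1 / s) = Real.exp (μ + s * v / 2) := by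
  have hmgf : ∫ x, Real.exp (s * x) ∂gaussianReal μ v = Real.exp (μ * s + v * s ^ 2 / 2) :=
    congrFun mgf_fun_id_gaussianReal s
  rw [hmgf, ← Real.exp_mul]
  congr 1
  field_simp

theorem atkinson_lognormal_general (μ φ : ℝ) (ε : ℝ) (hε1 : ε ≠ 1) :
    1 - (∫ x, Real.exp ((1 - ε) * x) ∂(gaussianReal μ ⟨φ ^ 2, sq_nonneg φ⟩)) ^ (1 / (1 - ε))
        / (∫ x, Real.exp x ∂(gaussianReal μ ⟨φ ^ 2, sq_nonneg φ⟩))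
      = 1 - Real.exp (-ε * φ ^ 2 / 2) := by
  set v : NNReal := ⟨φ ^ 2, sq_nonneg φ⟩
  have hmean : ∫ x, Real.exp x ∂gaussianReal μ v = Real.exp (μ + v / 2) := by
    simpa using integral_exp_mul_gaussianReal_rpow_inv μ v one_ne_zero
  rw [integral_exp_mul_gaussianReal_rpow_inv μ v (sub_ne_zero.mpr hε1.symm), hmean,
    ← Real.exp_sub]
  have hv : (v : ℝ) = φ ^ 2 := rfl
  rw [hv]
  congr 2
  ring

/-- For a log-normal variable `Z = exp X`, `X ~ N(μ, φ²)`, the population Atkinson index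
`1 − (E[Z^{1−ε}])^{1/(1−ε)} / E[Z]` equals `1 − exp(−ε φ² / 2)` for every `ε ≥ 0`, `ε ≠ 1`. -/
theorem atkinson_lognormal (μ φ : ℝ) (hφ : 0 < φ) (ε : ℝ) (hε : 0 ≤ ε) (hε1 : ε ≠ 1) :
    1 - (∫ x, Real.exp ((1 - ε) * x) ∂(gaussianReal μ ⟨φ ^ 2, sq_nonneg φ⟩)) ^ (1 / (1 - ε))
        / (∫ x, Real.exp x ∂(gaussianReal μ ⟨φ ^ 2, sq_nonneg φ⟩))
      = 1 - Real.exp (-ε * φ ^ 2 / 2) :=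
  atkinson_lognormal_general μ φ ε hε1
end

section
/- Let 0 < λ₂ < λ₁ < 1, φ > 0 and p ∈ (0,1), and let Y be a random variable on (0,1) with density f_FB(y) = p·f_B(y; λ₁, φ) + (1−p)·f_B(y; λ₂, φ) with respect to Lebesgue measure. Set w̃ = λ₁ − λ₂ and θ = λ₂ + p·w̃. Then Var[Y] = (θ(1−θ) + p(1−p)·w̃²·φ)/(φ + 1). -/
/-!
Multiplying the Beta density with shapes `(a, b)` by `y` gives `a / (a + b)` times the density
with shapes `(a + 1, b)` (from `Γ(s + 1) = s Γ(s)`), so a Beta component with mean `λ` and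
precision `φ` has second moment `λ (λφ + 1) / (φ + 1)` and `E (Y - c)² = λ(1 - λ)/(φ + 1) + (λ - c)²`.
Averaging over the two components with `λ₁ - θ = (1 - p) w̃` and `λ₂ - θ = -p w̃` gives the
formula (the law of total variance).
-/

open MeasureTheory

/-- Density of the Beta distribution in mean-precision parametrization: mean `μ ∈ (0,1)` and
precision `φ > 0`, i.e. shape parameters `μφ` and `(1−μ)φ`. -/
noncomputable def betaDensity (μ φ y : ℝ) : ℝ :=
  if 0 < y ∧ y < 1 then
    Real.Gamma φ / (Real.Gamma (μ * φ) * Real.Gamma ((1 - μ) * φ))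
      * y ^ (μ * φ - 1) * (1 - y) ^ ((1 - μ) * φ - 1)
  else 0

open ProbabilityTheory

namespace ProbabilityTheory

variable {α β : ℝ}

lemma beta_add_one_left (hα : 0 < α) (hβ : 0 < β) :
    beta (α + 1) β = α / (α + β) * beta α β := by
  have hαβ : α + β ≠ 0 := by positivity
  rw [beta, beta, add_right_comm, Real.Gamma_add_one hα.ne', Real.Gamma_add_one hαβ]
  field_simp

lemma betaPDFReal_nonneg (hα : 0 < α) (hβ : 0 < β) (x : ℝ) : 0 ≤ betaPDFReal α β x := by
  by_cases hx : 0 < x ∧ x < 1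
  · exact (betaPDFReal_pos hx.1 hx.2 hα hβ).le
  · simp [betaPDFReal, hx]

lemma integrable_betaPDFReal (hα : 0 < α) (hβ : 0 < β) : Integrable (betaPDFReal α β) := by
  refine (lintegral_ofReal_ne_top_iff_integrable (by fun_prop)
    (ae_of_all _ (betaPDFReal_nonneg hα hβ))).1 ?_
  change ∫⁻ x, betaPDF α β x ≠ ⊤
  simp [hα, hβ]

lemma integral_betaPDFReal (hα : 0 < α) (hβ : 0 < β) : ∫ x, betaPDFReal α β x = 1 := by
  rw [integral_eq_lintegral_of_nonneg_ae (ae_of_all _ (betaPDFReal_nonneg hα hβ)) (by fun_prop)]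
  change (∫⁻ x, betaPDF α β x).toReal = 1
  simp [hα, hβ]

lemma betaPDFReal_mul_self (hα : 0 < α) (hβ : 0 < β) (x : ℝ) :
    betaPDFReal α β x * x = α / (α + β) * betaPDFReal (α + 1) β x := by
  unfold betaPDFReal
  split_ifs with hx
  · have hB : beta α β ≠ 0 := (beta_pos hα hβ).ne'
    have hαβ : α + β ≠ 0 := by positivity
    have hx0 : x ≠ 0 := hx.1.ne'
    rw [beta_add_one_left hα hβ, add_sub_cancel_right, Real.rpow_sub_one hx0]
    field_simp
  · simp

lemma betaPDFReal_mul_sq (hα : 0 < α) (hβ : 0 < β) (x : ℝ) :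
    betaPDFReal α β x * x ^ 2 = α / (α + β) * (betaPDFReal (α + 1) β x * x) := by
  rw [sq, ← mul_assoc, betaPDFReal_mul_self hα hβ, mul_assoc]

lemma integrable_betaPDFReal_mul_self (hα : 0 < α) (hβ : 0 < β) :
    Integrable fun x => betaPDFReal α β x * x := by
  simp_rw [betaPDFReal_mul_self hα hβ]
  exact (integrable_betaPDFReal (by positivity) hβ).const_mul _

lemma integral_betaPDFReal_mul_self (hα : 0 < α) (hβ : 0 < β) :
    ∫ x, betaPDFReal α β x * x = α / (α + β) := by
  simp_rw [betaPDFReal_mul_self hα hβ, integral_const_mul,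
    integral_betaPDFReal (by positivity : 0 < α + 1) hβ, mul_one]

lemma integrable_betaPDFReal_mul_sq (hα : 0 < α) (hβ : 0 < β) :
    Integrable fun x => betaPDFReal α β x * x ^ 2 := by
  simp_rw [betaPDFReal_mul_sq hα hβ]
  exact (integrable_betaPDFReal_mul_self (by positivity) hβ).const_mul _

lemma integral_betaPDFReal_mul_sq (hα : 0 < α) (hβ : 0 < β) :
    ∫ x, betaPDFReal α β x * x ^ 2 = α / (α + β) * ((α + 1) / (α + β + 1)) := by
  simp_rw [betaPDFReal_mul_sq hα hβ, integral_const_mul,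
    integral_betaPDFReal_mul_self (by positivity : 0 < α + 1) hβ, add_right_comm]

end ProbabilityTheory

section SecondMoment

variable {Ω : Type*} [MeasurableSpace Ω] {μ : Measure Ω} {f X : Ω → ℝ}

lemma integrable_mul_sub_sq (h0 : Integrable f μ) (h1 : Integrable (fun ω => f ω * X ω) μ)
    (h2 : Integrable (fun ω => f ω * X ω ^ 2) μ) (c : ℝ) :
    Integrable (fun ω => f ω * (X ω - c) ^ 2) μ :=
  ((h2.sub (h1.const_mul (2 * c))).add (h0.const_mul (c ^ 2))).congr
    (ae_of_all _ fun ω => by simp only [Pi.add_apply, Pi.sub_apply]; ring)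

lemma integral_mul_sub_sq (h0 : Integrable f μ) (h1 : Integrable (fun ω => f ω * X ω) μ)
    (h2 : Integrable (fun ω => f ω * X ω ^ 2) μ) (c : ℝ) :
    ∫ ω, f ω * (X ω - c) ^ 2 ∂μ
      = ∫ ω, f ω * X ω ^ 2 ∂μ - 2 * c * ∫ ω, f ω * X ω ∂μ + c ^ 2 * ∫ ω, f ω ∂μ := by
  have h1' := h1.const_mul (2 * c)
  calc ∫ ω, f ω * (X ω - c) ^ 2 ∂μ
      = ∫ ω, f ω * X ω ^ 2 - 2 * c * (f ω * X ω) + c ^ 2 * f ω ∂μ :=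
        integral_congr_ae (ae_of_all _ fun ω => by ring)
    _ = _ := by
      rw [integral_add _ (h0.const_mul _), integral_sub h2 h1', integral_const_mul,
        integral_const_mul]
      exact h2.sub h1'

end SecondMoment

lemma integral_withDensity_ofReal {Ω : Type*} [MeasurableSpace Ω] {μ : Measure Ω} {f : Ω → ℝ}
    (hf : Measurable f) (hf0 : ∀ ω, 0 ≤ f ω) (g : Ω → ℝ) :
    ∫ ω, g ω ∂μ.withDensity (fun ω => ENNReal.ofReal (f ω)) = ∫ ω, f ω * g ω ∂μ := by
  rw [integral_withDensity_eq_integral_toReal_smul (by fun_prop)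
    (ae_of_all _ fun _ => ENNReal.ofReal_lt_top)]
  simp_rw [ENNReal.toReal_ofReal (hf0 _), smul_eq_mul]

lemma betaDensity_eq_betaPDFReal (μ φ : ℝ) :
    betaDensity μ φ = betaPDFReal (μ * φ) ((1 - μ) * φ) := by
  have hφ : μ * φ + (1 - μ) * φ = φ := by ring
  ext y
  simp only [betaDensity, betaPDFReal, beta, hφ, one_div_div]

section MeanPrecision

variable {μ φ : ℝ}

lemma mul_pos_and_one_sub_mul_pos (hμ0 : 0 < μ) (hμ1 : μ < 1) (hφ : 0 < φ) :
    0 < μ * φ ∧ 0 < (1 - μ) * φ :=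
  ⟨by positivity, mul_pos (by linarith) hφ⟩

lemma betaDensity_nonneg (hμ0 : 0 < μ) (hμ1 : μ < 1) (hφ : 0 < φ) (y : ℝ) :
    0 ≤ betaDensity μ φ y := by
  obtain ⟨ha, hb⟩ := mul_pos_and_one_sub_mul_pos hμ0 hμ1 hφ
  rw [betaDensity_eq_betaPDFReal]
  exact betaPDFReal_nonneg ha hb y

lemma integrable_betaDensity_mul_sub_sq (hμ0 : 0 < μ) (hμ1 : μ < 1) (hφ : 0 < φ) (c : ℝ) :
    Integrable fun y => betaDensity μ φ y * (y - c) ^ 2 := by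
  obtain ⟨ha, hb⟩ := mul_pos_and_one_sub_mul_pos hμ0 hμ1 hφ
  rw [betaDensity_eq_betaPDFReal]
  exact integrable_mul_sub_sq (X := fun y => y) (integrable_betaPDFReal ha hb)
    (integrable_betaPDFReal_mul_self ha hb) (integrable_betaPDFReal_mul_sq ha hb) c

lemma integral_betaDensity_mul_sub_sq (hμ0 : 0 < μ) (hμ1 : μ < 1) (hφ : 0 < φ) (c : ℝ) :
    ∫ y, betaDensity μ φ y * (y - c) ^ 2 = μ * (1 - μ) / (φ + 1) + (μ - c) ^ 2 := by
  obtain ⟨ha, hb⟩ := mul_pos_and_one_sub_mul_pos hμ0 hμ1 hφ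
  have hsum : μ * φ + (1 - μ) * φ = φ := by ring
  rw [betaDensity_eq_betaPDFReal, integral_mul_sub_sq (X := fun y => y)
    (integrable_betaPDFReal ha hb) (integrable_betaPDFReal_mul_self ha hb)
    (integrable_betaPDFReal_mul_sq ha hb) c]
  simp only [integral_betaPDFReal_mul_sq ha hb, integral_betaPDFReal_mul_self ha hb,
    integral_betaPDFReal ha hb, hsum]
  field_simp
  ring

end MeanPrecision

/-- A random variable on `(0,1)` with Flexible Beta density
`p·f_B(·; λ₁, φ) + (1−p)·f_B(·; λ₂, φ)`, with `w̃ = λ₁ − λ₂` and mean `θ = λ₂ + p·w̃`, has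
variance `(θ(1−θ) + p(1−p)·w̃²·φ)/(φ + 1)`. -/
theorem flexible_beta_variance (lam1 lam2 φ p : ℝ) (h2 : 0 < lam2) (h21 : lam2 < lam1)
    (h1 : lam1 < 1) (hφ : 0 < φ) (hp : 0 < p) (hp1 : p < 1)
    (P : Measure ℝ)
    (hP : P = volume.withDensity
      (fun y => ENNReal.ofReal (p * betaDensity lam1 φ y + (1 - p) * betaDensity lam2 φ y)))
    (w θ : ℝ) (hw : w = lam1 - lam2) (hθ : θ = lam2 + p * w) :
    (∫ y, (y - θ) ^ 2 ∂P) = (θ * (1 - θ) + p * (1 - p) * w ^ 2 * φ) / (φ + 1) := by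
  have hlam1 : 0 < lam1 := h2.trans h21
  have hlam2 : lam2 < 1 := h21.trans h1
  have hd_meas :
      Measurable fun y => p * betaDensity lam1 φ y + (1 - p) * betaDensity lam2 φ y := by
    simp only [betaDensity_eq_betaPDFReal]; fun_prop
  have hd_nonneg (y : ℝ) : 0 ≤ p * betaDensity lam1 φ y + (1 - p) * betaDensity lam2 φ y :=
    add_nonneg (mul_nonneg hp.le (betaDensity_nonneg hlam1 h1 hφ y))
      (mul_nonneg (sub_nonneg.2 hp1.le) (betaDensity_nonneg h2 hlam2 hφ y))
  rw [hP, integral_withDensity_ofReal hd_meas hd_nonneg]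
  simp_rw [add_mul, mul_assoc]
  rw [integral_add ((integrable_betaDensity_mul_sub_sq hlam1 h1 hφ θ).const_mul _)
    ((integrable_betaDensity_mul_sub_sq h2 hlam2 hφ θ).const_mul _), integral_const_mul,
    integral_const_mul, integral_betaDensity_mul_sub_sq hlam1 h1 hφ,
    integral_betaDensity_mul_sub_sq h2 hlam2 hφ]
  subst hθ hw
  field_simp
  ring
end

section
/- Let λ₂ ∈ (0,1), p ∈ (0,1), w ∈ (0,1) and V > 0. Define w̃ = w · min{(1−λ₂)/p, √(V/(p(1−p)))} and θ = λ₂ + p·w̃. Then λ₂ < θ < 1 and p(1−p)·w̃² < V. Consequently, if in addition V < θ(1−θ), the quantity φ = (θ(1−θ) − V)/(V − p(1−p)w̃²) is strictly positive. -/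
/-- Variation independence of the Flexible Beta reparametrization: with
`w̃ = w · min{(1−λ₂)/p, √(V/(p(1−p)))}` and `θ = λ₂ + p·w̃`, one has `λ₂ < θ < 1` and
`p(1−p)w̃² < V`; hence if moreover `V < θ(1−θ)`, the precision
`φ = (θ(1−θ) − V)/(V − p(1−p)w̃²)` is strictly positive. -/
theorem fb_variation_independence (lam2 p w V : ℝ) (h2 : 0 < lam2) (h21 : lam2 < 1)
    (hp : 0 < p) (hp1 : p < 1) (hw : 0 < w) (hw1 : w < 1) (hV : 0 < V)
    (wt θ : ℝ)
    (hwt : wt = w * min ((1 - lam2) / p) (Real.sqrt (V / (p * (1 - p)))))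
    (hθ : θ = lam2 + p * wt) :
    lam2 < θ ∧ θ < 1 ∧ p * (1 - p) * wt ^ 2 < V
      ∧ (V < θ * (1 - θ) →
          0 < (θ * (1 - θ) - V) / (V - p * (1 - p) * wt ^ 2)) := by
  have hp' : 0 < 1 - p := by linarith
  have hl : 0 < 1 - lam2 := by linarith
  have hdiv : 0 < (1 - lam2) / p := div_pos hl hp
  have hVq : 0 < V / (p * (1 - p)) := div_pos hV (mul_pos hp hp')
  have hsq : 0 < Real.sqrt (V / (p * (1 - p))) := Real.sqrt_pos.mpr hVq
  have hminpos : 0 < min ((1 - lam2) / p) (Real.sqrt (V / (p * (1 - p)))) :=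
    lt_min hdiv hsq
  have hwtpos : 0 < wt := by rw [hwt]; exact mul_pos hw hminpos
  have h1 : lam2 < θ := by rw [hθ]; nlinarith [mul_pos hp hwtpos]
  -- θ < 1
  have hwt_le1 : wt < (1 - lam2) / p := by
    rw [hwt]
    calc w * min ((1 - lam2) / p) (Real.sqrt (V / (p * (1 - p))))
        ≤ w * ((1 - lam2) / p) := by
          exact mul_le_mul_of_nonneg_left (min_le_left _ _) hw.le
      _ < (1 - lam2) / p := by nlinarith
  have h2' : θ < 1 := by
    rw [hθ]
    have := (lt_div_iff₀ hp).mp hwt_le1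
    nlinarith
  -- variance
  have hwt_le2 : wt < Real.sqrt (V / (p * (1 - p))) := by
    rw [hwt]
    calc w * min ((1 - lam2) / p) (Real.sqrt (V / (p * (1 - p))))
        ≤ w * Real.sqrt (V / (p * (1 - p))) :=
          mul_le_mul_of_nonneg_left (min_le_right _ _) hw.le
      _ < Real.sqrt (V / (p * (1 - p))) := by nlinarith
  have hsqsq : (Real.sqrt (V / (p * (1 - p)))) ^ 2 = V / (p * (1 - p)) :=
    Real.sq_sqrt hVq.le
  have hwt2 : wt ^ 2 < V / (p * (1 - p)) := by
    rw [← hsqsq]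
    exact pow_lt_pow_left₀ hwt_le2 hwtpos.le (by norm_num) |>.trans_le le_rfl
  have hvar : p * (1 - p) * wt ^ 2 < V := by
    have := (lt_div_iff₀' (mul_pos hp hp')).mp hwt2
    linarith
  refine ⟨h1, h2', hvar, fun hVθ => div_pos (by linarith) (by linarith)⟩
end
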